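/- Let T be a normal τ-measurable operator with μ_t(T) → 0 at infinity, and write Re T = (T+T*)/2. Then for 0 < r < s < ∞, |Φ(r,s; Re T) − Re Φ(r,s; T)| ≤ r τ(E_{|T|}(r,∞)) + s τ(E_{|T|}(s,∞)), where Φ(r,s;T) = ∫_{r<|z|≤s} z dν_T(z) and ν_T is the spectral measure. -/

import Mathlib

/-!
Both integrals are integrals of `Re z` against `ν`: the first over `A = {r < |Re z| ≤ s}`
(by change of variables), the second over `B = {r < |z| ≤ s}`. Their difference is
`∫_{A \ B} Re z − ∫_{B \ A} Re z`. On `A \ B` we have `|Re z| ≤ s < |z|`, and on `B \ A` we have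
`|Re z| ≤ r < |z|`, which gives the two error terms.
-/

open MeasureTheory Set

section SetIntegral

variable {α E : Type*} [MeasurableSpace α] {μ : Measure α}
  [NormedAddCommGroup E] {f : α → E} {s t : Set α} {C : ℝ}

theorem integrableOn_of_norm_le_const (hs : MeasurableSet s) (hμs : μ s < ⊤)
    (hf : AEStronglyMeasurable f μ) (hC : ∀ x ∈ s, ‖f x‖ ≤ C) : IntegrableOn f s μ :=
  Measure.integrableOn_of_bounded hμs.ne hf ((ae_restrict_iff' hs).2 (.of_forall hC))

variable [NormedSpace ℝ E]

theorem setIntegral_sub_setIntegral_eq_sdiff (hs : MeasurableSet s) (ht : MeasurableSet t)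
    (hfs : IntegrableOn f s μ) (hft : IntegrableOn f t μ) :
    ∫ x in s, f x ∂μ - ∫ x in t, f x ∂μ = ∫ x in s \ t, f x ∂μ - ∫ x in t \ s, f x ∂μ := by
  rw [← integral_inter_add_sdiff ht hfs, ← integral_inter_add_sdiff hs hft, inter_comm t s]
  abel

theorem norm_setIntegral_le_of_norm_le_const_of_subset (hst : s ⊆ t) (hμt : μ t < ⊤)
    (hC0 : 0 ≤ C) (hC : ∀ x ∈ s, ‖f x‖ ≤ C) : ‖∫ x in s, f x ∂μ‖ ≤ C * μ.real t :=
  (norm_setIntegral_le_of_norm_le_const ((measure_mono hst).trans_lt hμt) hC).trans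
    (mul_le_mul_of_nonneg_left (measureReal_mono hst hμt.ne) hC0)

end SetIntegral

namespace Complex

theorem abs_re_shell_sdiff_shell_subset (r s : ℝ) :
    {z : ℂ | r < |z.re| ∧ |z.re| ≤ s} \ {z | r < ‖z‖ ∧ ‖z‖ ≤ s} ⊆ {z | s < ‖z‖} := by
  rintro z ⟨⟨hr, -⟩, hz⟩
  by_contra hs
  exact hz ⟨hr.trans_le (abs_re_le_norm z), not_lt.1 hs⟩

theorem abs_re_le_of_mem_shell_sdiff {r s : ℝ} {z : ℂ}
    (hz : z ∈ {z : ℂ | r < ‖z‖ ∧ ‖z‖ ≤ s} \ {z | r < |z.re| ∧ |z.re| ≤ s}) : |z.re| ≤ r := by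
  obtain ⟨⟨-, hs⟩, hz⟩ := hz
  by_contra hr
  exact hz ⟨not_le.1 hr, (abs_re_le_norm z).trans hs⟩

end Complex

/-- For a normal τ-measurable operator `T` with `μ_t(T) → 0` and spectral measure
`ν = ν_T`, the spectral measure of `Re T` is the pushforward of `ν` under `z ↦ Re z`,
and for `0 < r < s`,
`|Φ(r,s;Re T) − Re Φ(r,s;T)| ≤ r τ(E_{|T|}(r,∞)) + s τ(E_{|T|}(s,∞))`. -/
theorem stmt_10 (ν : Measure ℂ)
    (hfin : ∀ x : ℝ, 0 < x → ν {z : ℂ | x < ‖z‖} < ⊤)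
    (r s : ℝ) (hr : 0 < r) (hrs : r < s) :
    |(∫ x in {x : ℝ | r < |x| ∧ |x| ≤ s}, x ∂(Measure.map Complex.re ν)) -
        (∫ z in {z : ℂ | r < ‖z‖ ∧ ‖z‖ ≤ s}, z ∂ν).re| ≤
      r * (ν {z : ℂ | r < ‖z‖}).toReal + s * (ν {z : ℂ | s < ‖z‖}).toReal := by
  have hs : 0 < s := hr.trans hrs
  set A : Set ℂ := {z | r < |z.re| ∧ |z.re| ≤ s}
  set B : Set ℂ := {z | r < ‖z‖ ∧ ‖z‖ ≤ s}
  have hA : MeasurableSet A := by measurability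
  have hB : MeasurableSet B := by measurability
  have hνA : ν A < ⊤ :=
    (measure_mono fun z hz ↦ hz.1.trans_le (Complex.abs_re_le_norm z)).trans_lt (hfin r hr)
  have hνB : ν B < ⊤ := (measure_mono fun _ hz ↦ hz.1).trans_lt (hfin r hr)
  have hre_int : IntegrableOn (fun z : ℂ ↦ z.re) A ν :=
    integrableOn_of_norm_le_const hA hνA Complex.measurable_re.aestronglyMeasurable
      fun _ hz ↦ hz.2
  have hid_int : IntegrableOn (fun z : ℂ ↦ z) B ν :=
    integrableOn_of_norm_le_const hB hνB aestronglyMeasurable_id fun _ hz ↦ hz.2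
  have hmap : ∫ x in {x : ℝ | r < |x| ∧ |x| ≤ s}, x ∂(Measure.map Complex.re ν) =
      ∫ z in A, z.re ∂ν :=
    setIntegral_map (by measurability) aestronglyMeasurable_id
      Complex.measurable_re.aemeasurable
  have hre : (∫ z in B, z ∂ν).re = ∫ z in B, z.re ∂ν := (integral_re hid_int).symm
  rw [hmap, hre, setIntegral_sub_setIntegral_eq_sdiff hA hB hre_int hid_int.re, add_comm]
  refine (abs_sub _ _).trans (add_le_add ?_ ?_)
  · exact norm_setIntegral_le_of_norm_le_const_of_subset (f := Complex.re)
      (Complex.abs_re_shell_sdiff_shell_subset r s) (hfin s hs) hs.le fun _ hz ↦ hz.1.2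
  · exact norm_setIntegral_le_of_norm_le_const_of_subset (f := Complex.re)
      (fun _ hz ↦ hz.1.1) (hfin r hr) hr.le fun _ hz ↦ Complex.abs_re_le_of_mem_shell_sdiff hz
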